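/- Suppose (e, f) is a colorful pair of orthonormal bases for V with respect to a coloring c: N → [d] compatible with the order on N (i.e., ⟨f_v, e_u⟩ = 0 whenever c(u) ≠ c(v), and u ≤ v implies c(u) ≤ c(v)). Then for every R ⊆ N, writing R_i = R ∩ c⁻¹(i) and N_i = c⁻¹(i): e_R = ⋀_{i=1}^{d} Σ_{S_i ⊆ N_i, |S_i|=|R_i|} ⟨f_{S_i}, e_{R_i}⟩ · f_{S_i}. -/

import Mathlib

set_option linter.unusedSectionVars false
set_option maxHeartbeats 1000000


open Finset

variable {N : Type*} [Fintype N] [LinearOrder N]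

/-- inv(S,T) = number of pairs (s,t) ∈ S × T with s > t. -/
def invCount (S T : Finset N) : ℕ := ((S ×ˢ T).filter fun p => p.2 < p.1).card

/-- sgn(S,T) = (-1)^inv(S,T). -/
def esign (S T : Finset N) : ℝ := (-1 : ℝ) ^ invCount S T

/-- The basis vector e_S of the exterior algebra, modelled as `Finset N → ℝ`. -/
def eb (S : Finset N) : Finset N → ℝ := fun T => if T = S then 1 else 0

/-- The bilinear exterior product, defined on basis vectors by
`e_S ∧ e_T = sgn(S,T) e_{S∪T}` if `S ∩ T = ∅`, and `0` otherwise. -/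
def wedge (f g : Finset N → ℝ) : Finset N → ℝ :=
  fun U => ∑ S ∈ U.powerset, esign S (U \ S) * f S * g (U \ S)

/-- Inner product on the exterior algebra making `{e_S}` orthonormal. -/
def ip (f g : Finset N → ℝ) : ℝ := ∑ S : Finset N, f S * g S

/-- A vector of V (coordinates `a`) viewed inside the exterior algebra. -/
def vec (a : N → ℝ) : Finset N → ℝ := fun T => ∑ i : N, if T = {i} then a i else 0

/-- Inner product on V in coordinates. -/
def ipV (a b : N → ℝ) : ℝ := ∑ i : N, a i * b i

/-- Wedge product of a list of elements of the exterior algebra (e_∅ is the unit). -/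
def wedgeList (l : List (Finset N → ℝ)) : Finset N → ℝ := l.foldr wedge (eb ∅)

/-- Ordered wedge product f_S = f_{s₁} ∧ ⋯ ∧ f_{s_k} for S = {s₁ < ⋯ < s_k},
for a family of vectors of V given in coordinates. -/
def wedgeFam (f : N → N → ℝ) (S : Finset N) : Finset N → ℝ :=
  wedgeList ((S.sort (· ≤ ·)).map (fun v => vec (f v)))

/-- A family of vectors of V (in coordinates) is orthonormal. -/
def Orthonormalish (f : N → N → ℝ) : Prop :=
  ∀ u v : N, ipV (f u) (f v) = if u = v then 1 else 0

/-- The bilinear left interior product, defined on basis vectors by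
`e_T ⌞ e_S = sgn(S∖T, T)·e_{S∖T}` if `T ⊆ S` and `0` otherwise. -/
def lint (g f : Finset N → ℝ) : Finset N → ℝ :=
  fun U => ∑ T : Finset N, if Disjoint T U then esign U T * g T * f (U ∪ T) else 0


/- ## sign lemmas -/

lemma invCount_union_left {A B : Finset N} (C : Finset N) (h : Disjoint A B) :
    invCount (A ∪ B) C = invCount A C + invCount B C := by
  unfold invCount
  rw [Finset.union_product, Finset.filter_union, Finset.card_union_of_disjoint]
  exact Finset.disjoint_filter_filter <| Finset.disjoint_left.2 fun p hp hp' => by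
    simp only [Finset.mem_product] at hp hp'
    exact (Finset.disjoint_left.1 h hp.1) hp'.1

lemma invCount_union_right (A : Finset N) {B C : Finset N} (h : Disjoint B C) :
    invCount A (B ∪ C) = invCount A B + invCount A C := by
  unfold invCount
  rw [Finset.product_union, Finset.filter_union, Finset.card_union_of_disjoint]
  exact Finset.disjoint_filter_filter <| Finset.disjoint_left.2 fun p hp hp' => by
    simp only [Finset.mem_product] at hp hp'
    exact (Finset.disjoint_left.1 h hp.2) hp'.2

@[simp] lemma invCount_empty_left (T : Finset N) : invCount ∅ T = 0 := by
  simp [invCount]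

@[simp] lemma invCount_empty_right (S : Finset N) : invCount S ∅ = 0 := by
  simp [invCount]

lemma esign_union_left {A B : Finset N} (C : Finset N) (h : Disjoint A B) :
    esign (A ∪ B) C = esign A C * esign B C := by
  rw [esign, invCount_union_left C h, pow_add]; rfl

lemma esign_union_right (A : Finset N) {B C : Finset N} (h : Disjoint B C) :
    esign A (B ∪ C) = esign A B * esign A C := by
  rw [esign, invCount_union_right A h, pow_add]; rfl

@[simp] lemma esign_empty_left (T : Finset N) : esign ∅ T = 1 := by simp [esign]
@[simp] lemma esign_empty_right (S : Finset N) : esign S ∅ = 1 := by simp [esign]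

lemma esign_mul_self (S T : Finset N) : esign S T * esign S T = 1 := by
  rw [esign, ← pow_add]
  exact (neg_one_pow_eq_one_iff_even (by norm_num)).2 ⟨invCount S T, rfl⟩

lemma esign_ne_zero (S T : Finset N) : esign S T ≠ 0 := by
  intro h; have := esign_mul_self S T; rw [h] at this; simpa using this

lemma invCount_singleton_right (S : Finset N) (t : N) :
    invCount S {t} = (S.filter fun s => t < s).card := by
  unfold invCount
  have : ((S ×ˢ {t}).filter fun p => p.2 < p.1) = (S.filter fun s => t < s) ×ˢ {t} := by
    ext ⟨a, b⟩
    simp only [Finset.mem_filter, Finset.mem_product, Finset.mem_singleton]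
    constructor
    · rintro ⟨⟨ha, hb⟩, hlt⟩; subst hb; exact ⟨⟨ha, hlt⟩, rfl⟩
    · rintro ⟨⟨ha, hlt⟩, hb⟩; subst hb; exact ⟨⟨ha, rfl⟩, hlt⟩
  rw [this, Finset.card_product, Finset.card_singleton, mul_one]

lemma invCount_singleton_left (t : N) (S : Finset N) :
    invCount {t} S = (S.filter fun s => s < t).card := by
  unfold invCount
  have : (({t} ×ˢ S).filter fun p => p.2 < p.1) = {t} ×ˢ (S.filter fun s => s < t) := by
    ext ⟨a, b⟩
    simp only [Finset.mem_filter, Finset.mem_product, Finset.mem_singleton]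
    constructor
    · rintro ⟨⟨ha, hb⟩, hlt⟩; subst ha; exact ⟨rfl, hb, hlt⟩
    · rintro ⟨ha, hb, hlt⟩; subst ha; exact ⟨⟨rfl, hb⟩, hlt⟩
  rw [this, Finset.card_product, Finset.card_singleton, one_mul]

/- ## linearity -/

lemma wedge_sum_left {ι : Type*} (s : Finset ι) (F : ι → Finset N → ℝ) (g : Finset N → ℝ) :
    wedge (∑ i ∈ s, F i) g = ∑ i ∈ s, wedge (F i) g := by
  funext U
  simp only [wedge, Finset.sum_apply, Finset.sum_mul, Finset.mul_sum]
  rw [Finset.sum_comm]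

lemma wedge_sum_right {ι : Type*} (s : Finset ι) (F : ι → Finset N → ℝ) (g : Finset N → ℝ) :
    wedge g (∑ i ∈ s, F i) = ∑ i ∈ s, wedge g (F i) := by
  funext U
  simp only [wedge, Finset.sum_apply, Finset.sum_mul, Finset.mul_sum]
  rw [Finset.sum_comm]

lemma wedge_smul_left (r : ℝ) (x g : Finset N → ℝ) :
    wedge (r • x) g = r • wedge x g := by
  funext U
  simp only [wedge, Pi.smul_apply, smul_eq_mul, Finset.mul_sum]
  exact Finset.sum_congr rfl fun S _ => by ring

lemma wedge_smul_right (r : ℝ) (x g : Finset N → ℝ) :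
    wedge g (r • x) = r • wedge g x := by
  funext U
  simp only [wedge, Pi.smul_apply, smul_eq_mul, Finset.mul_sum]
  exact Finset.sum_congr rfl fun S _ => by ring

@[simp] lemma wedge_zero_left (g : Finset N → ℝ) : wedge 0 g = 0 := by
  funext U; simp [wedge]

@[simp] lemma wedge_zero_right (g : Finset N → ℝ) : wedge g 0 = 0 := by
  funext U; simp [wedge]

lemma lint_sum_left {ι : Type*} (s : Finset ι) (F : ι → Finset N → ℝ) (g : Finset N → ℝ) :
    lint (∑ i ∈ s, F i) g = ∑ i ∈ s, lint (F i) g := by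
  funext U
  simp only [lint, Finset.sum_apply, Finset.sum_mul, Finset.mul_sum]
  rw [Finset.sum_comm]
  refine Finset.sum_congr rfl fun T _ => ?_
  split_ifs with h
  · rfl
  · exact Finset.sum_const_zero.symm

lemma lint_sum_right {ι : Type*} (s : Finset ι) (F : ι → Finset N → ℝ) (g : Finset N → ℝ) :
    lint g (∑ i ∈ s, F i) = ∑ i ∈ s, lint g (F i) := by
  funext U
  simp only [lint, Finset.sum_apply, Finset.sum_mul, Finset.mul_sum]
  rw [Finset.sum_comm]
  refine Finset.sum_congr rfl fun T _ => ?_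
  split_ifs with h
  · rfl
  · exact Finset.sum_const_zero.symm

lemma lint_smul_left (r : ℝ) (x g : Finset N → ℝ) :
    lint (r • x) g = r • lint x g := by
  funext U
  simp only [lint, Pi.smul_apply, smul_eq_mul, Finset.mul_sum]
  refine Finset.sum_congr rfl fun S _ => ?_
  split_ifs <;> ring

lemma lint_smul_right (r : ℝ) (x g : Finset N → ℝ) :
    lint g (r • x) = r • lint g x := by
  funext U
  simp only [lint, Pi.smul_apply, smul_eq_mul, Finset.mul_sum]
  refine Finset.sum_congr rfl fun S _ => ?_
  split_ifs <;> ring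

@[simp] lemma lint_zero_left (g : Finset N → ℝ) : lint 0 g = 0 := by
  funext U; simp [lint]

@[simp] lemma lint_zero_right (g : Finset N → ℝ) : lint g 0 = 0 := by
  funext U; simp [lint]

lemma ip_sum_left {ι : Type*} (s : Finset ι) (F : ι → Finset N → ℝ) (g : Finset N → ℝ) :
    ip (∑ i ∈ s, F i) g = ∑ i ∈ s, ip (F i) g := by
  simp only [ip, Finset.sum_apply, Finset.sum_mul]
  rw [Finset.sum_comm]

lemma ip_sum_right {ι : Type*} (s : Finset ι) (F : ι → Finset N → ℝ) (g : Finset N → ℝ) :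
    ip g (∑ i ∈ s, F i) = ∑ i ∈ s, ip g (F i) := by
  simp only [ip, Finset.sum_apply, Finset.mul_sum]
  rw [Finset.sum_comm]

lemma ip_smul_left (r : ℝ) (x g : Finset N → ℝ) : ip (r • x) g = r * ip x g := by
  simp only [ip, Pi.smul_apply, smul_eq_mul, Finset.mul_sum]
  exact Finset.sum_congr rfl fun S _ => by ring

lemma ip_smul_right (r : ℝ) (x g : Finset N → ℝ) : ip g (r • x) = r * ip g x := by
  simp only [ip, Pi.smul_apply, smul_eq_mul, Finset.mul_sum]
  exact Finset.sum_congr rfl fun S _ => by ring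

@[simp] lemma ip_zero_left (g : Finset N → ℝ) : ip 0 g = 0 := by simp [ip]
@[simp] lemma ip_zero_right (g : Finset N → ℝ) : ip g 0 = 0 := by simp [ip]

/- ## basis computations -/

lemma eb_expand (x : Finset N → ℝ) : (∑ C : Finset N, x C • eb C) = x := by
  funext U
  simp only [Finset.sum_apply, Pi.smul_apply, eb, smul_eq_mul, mul_ite, mul_one, mul_zero]
  simp

lemma wedge_eb_eb (A B : Finset N) :
    wedge (eb A) (eb B) =
      if Disjoint A B then esign A B • eb (A ∪ B) else (0 : Finset N → ℝ) := by
  funext U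
  show (∑ S ∈ U.powerset, esign S (U \ S) * eb A S * eb B (U \ S)) = _
  by_cases hAU : A ⊆ U
  · rw [Finset.sum_eq_single A (fun b _ hb => by simp [eb, hb])
      (fun h => (h (Finset.mem_powerset.2 hAU)).elim)]
    by_cases hB : U \ A = B
    · subst hB
      have hd : Disjoint A (U \ A) := Finset.disjoint_sdiff
      have hU : A ∪ (U \ A) = U := Finset.union_sdiff_of_subset hAU
      simp [eb, hd, hU]
    · have h1 : eb B (U \ A) = 0 := by simp [eb, hB]
      rw [h1, mul_zero]
      split_ifs with hd
      · simp only [Pi.smul_apply, eb, smul_eq_mul]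
        rw [if_neg, mul_zero]
        intro hU
        exact hB (by rw [hU, Finset.union_sdiff_cancel_left hd])
      · rfl
  · rw [Finset.sum_eq_zero (fun b hb => by
      have hbA : b ≠ A := fun h => hAU (h ▸ Finset.mem_powerset.1 hb)
      simp [eb, hbA])]
    split_ifs with hd
    · simp only [Pi.smul_apply, eb, smul_eq_mul]
      rw [if_neg (fun hU : U = A ∪ B => hAU (hU ▸ Finset.subset_union_left)), mul_zero]
    · rfl

lemma lint_eb_eb (A D : Finset N) :
    lint (eb A) (eb D) =
      if A ⊆ D then esign (D \ A) A • eb (D \ A) else (0 : Finset N → ℝ) := by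
  funext U
  show (∑ T : Finset N, if Disjoint T U then esign U T * eb A T * eb D (U ∪ T) else 0) = _
  rw [Finset.sum_eq_single A (fun b _ hb => by simp [eb, hb]) (fun h => (h (Finset.mem_univ A)).elim)]
  by_cases hd : Disjoint A U
  · rw [if_pos hd]
    by_cases hD : U ∪ A = D
    · have hAD : A ⊆ D := hD ▸ Finset.subset_union_right
      have hDA : D \ A = U := by rw [← hD, Finset.union_sdiff_cancel_right hd.symm]
      simp [eb, hD, hAD, hDA]
    · have h1 : eb D (U ∪ A) = 0 := by simp [eb, hD]
      rw [h1, mul_zero]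
      split_ifs with hAD
      · simp only [Pi.smul_apply, eb, smul_eq_mul]
        rw [if_neg, mul_zero]
        intro hU
        exact hD (by rw [hU, Finset.sdiff_union_of_subset hAD])
      · rfl
  · rw [if_neg hd]
    split_ifs with hAD
    · simp only [Pi.smul_apply, eb, smul_eq_mul]
      rw [if_neg, mul_zero]
      intro hU
      exact hd (hU ▸ (Finset.sdiff_disjoint.symm : Disjoint A (D \ A)))
    · rfl

@[simp] lemma ip_eb_eb (A B : Finset N) :
    ip (eb A) (eb B) = if A = B then 1 else 0 := by
  rw [ip, Finset.sum_eq_single A (fun b _ hb => by simp [eb, hb]) (fun h => (h (Finset.mem_univ A)).elim)]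
  simp only [eb, if_pos rfl, one_mul]
  split_ifs with h1 h2 h2 <;> simp_all [eq_comm]

/- ## unit laws -/

@[simp] lemma wedge_unit_right (x : Finset N → ℝ) : wedge x (eb ∅) = x := by
  conv_lhs => rw [← eb_expand x]
  rw [wedge_sum_left]
  conv_rhs => rw [← eb_expand x]
  refine Finset.sum_congr rfl fun A _ => ?_
  rw [wedge_smul_left, wedge_eb_eb, if_pos (Finset.disjoint_empty_right A)]
  simp

@[simp] lemma wedge_unit_left (x : Finset N → ℝ) : wedge (eb ∅) x = x := by
  conv_lhs => rw [← eb_expand x]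
  rw [wedge_sum_right]
  conv_rhs => rw [← eb_expand x]
  refine Finset.sum_congr rfl fun A _ => ?_
  rw [wedge_smul_right, wedge_eb_eb, if_pos (Finset.disjoint_empty_left A)]
  simp

/- ## associativity -/

lemma wedge_assoc_eb (A B C : Finset N) :
    wedge (wedge (eb A) (eb B)) (eb C) = wedge (eb A) (wedge (eb B) (eb C)) := by
  rw [wedge_eb_eb A B, wedge_eb_eb B C]
  by_cases hAB : Disjoint A B
  · by_cases hBC : Disjoint B C
    · rw [if_pos hAB, if_pos hBC, wedge_smul_left, wedge_smul_right, wedge_eb_eb, wedge_eb_eb]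
      by_cases hAC : Disjoint A C
      · rw [if_pos (Finset.disjoint_union_left.2 ⟨hAC, hBC⟩),
          if_pos (Finset.disjoint_union_right.2 ⟨hAB, hAC⟩), smul_smul, smul_smul,
          ← Finset.union_assoc]
        congr 1
        rw [esign_union_left C hAB, esign_union_right A hBC]
        ring
      · rw [if_neg (fun h => hAC (Finset.disjoint_union_left.1 h).1),
          if_neg (fun h => hAC (Finset.disjoint_union_right.1 h).2), smul_zero, smul_zero]
    · rw [if_pos hAB, if_neg hBC, wedge_smul_left, wedge_zero_right, wedge_eb_eb,
        if_neg (fun h => hBC (Finset.disjoint_union_left.1 h).2), smul_zero]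
  · by_cases hBC : Disjoint B C
    · rw [if_neg hAB, if_pos hBC, wedge_zero_left, wedge_smul_right, wedge_eb_eb,
        if_neg (fun h => hAB (Finset.disjoint_union_right.1 h).1), smul_zero]
    · rw [if_neg hAB, if_neg hBC, wedge_zero_left, wedge_zero_right]

lemma wedge_assoc (x y z : Finset N → ℝ) :
    wedge (wedge x y) z = wedge x (wedge y z) := by
  conv_lhs => rw [← eb_expand x, ← eb_expand y, ← eb_expand z]
  conv_rhs => rw [← eb_expand x, ← eb_expand y, ← eb_expand z]
  simp only [wedge_sum_left, wedge_sum_right, wedge_smul_left, wedge_smul_right, wedge_assoc_eb]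

/- ## adjunction -/

lemma ip_wedge_eb (A B C : Finset N) :
    ip (wedge (eb A) (eb B)) (eb C) = ip (eb A) (lint (eb B) (eb C)) := by
  rw [wedge_eb_eb, lint_eb_eb]
  by_cases hAB : Disjoint A B
  · rw [if_pos hAB, ip_smul_left, ip_eb_eb]
    by_cases hBC : B ⊆ C
    · rw [if_pos hBC, ip_smul_right, ip_eb_eb]
      by_cases h : A ∪ B = C
      · have hA : A = C \ B := by rw [← h, Finset.union_sdiff_cancel_right hAB]
        rw [if_pos h, if_pos hA, mul_one, mul_one, hA]
      · rw [if_neg h, if_neg (fun hA : A = C \ B => h (by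
          rw [hA, Finset.sdiff_union_of_subset hBC])), mul_zero, mul_zero]
    · rw [if_neg hBC, ip_zero_right,
        if_neg (fun h : A ∪ B = C => hBC (h ▸ Finset.subset_union_right)), mul_zero]
  · rw [if_neg hAB, ip_zero_left]
    split_ifs with hBC
    · rw [ip_smul_right, ip_eb_eb,
        if_neg (fun h : A = C \ B => hAB (h ▸ (Finset.sdiff_disjoint : Disjoint (C \ B) B))),
        mul_zero]
    · rw [ip_zero_right]

lemma ip_wedge (x g y : Finset N → ℝ) : ip (wedge x g) y = ip x (lint g y) := by
  conv_lhs => rw [← eb_expand x, ← eb_expand g, ← eb_expand y]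
  conv_rhs => rw [← eb_expand x, ← eb_expand g, ← eb_expand y]
  simp only [wedge_sum_left, wedge_sum_right, wedge_smul_left, wedge_smul_right,
    lint_sum_left, lint_sum_right, lint_smul_left, lint_smul_right,
    ip_sum_left, ip_sum_right, ip_smul_left, ip_smul_right, ip_wedge_eb]


/- ## vec and interior product -/

lemma vec_expand (a : N → ℝ) : vec a = ∑ t : N, a t • eb {t} := by
  funext T
  simp only [vec, Finset.sum_apply, Pi.smul_apply, eb, smul_eq_mul, mul_ite, mul_one, mul_zero]

lemma esign_insert_singleton {x : N} {A : Finset N} (hx : x ∉ A) (y : N) :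
    esign (insert x A) {y} = (if y < x then -1 else 1) * esign A {y} := by
  rw [esign, esign, invCount_singleton_right, invCount_singleton_right, Finset.filter_insert]
  split_ifs with h
  · rw [Finset.card_insert_of_notMem (fun hh => hx (Finset.mem_filter.1 hh).1), pow_succ]
    ring
  · rw [one_mul]

lemma union_singleton' (C : Finset N) (s : N) : C ∪ {s} = insert s C := by
  rw [Finset.union_comm, ← Finset.insert_eq]

lemma sdiff_union_singleton {C : Finset N} {t s : N} (hts : t ≠ s) :
    (C ∪ {s}) \ {t} = (C \ {t}) ∪ {s} := by
  ext x
  simp only [Finset.mem_sdiff, Finset.mem_union, Finset.mem_singleton]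
  constructor
  · rintro ⟨h1 | h1, h2⟩
    · exact Or.inl ⟨h1, h2⟩
    · exact Or.inr h1
  · rintro (⟨h1, h2⟩ | h1)
    · exact ⟨Or.inl h1, h2⟩
    · exact ⟨Or.inr h1, fun hx => hts (hx.symm.trans h1)⟩

lemma lint_wedge_eb_eb (t s : N) (C : Finset N) :
    lint (eb {t}) (wedge (eb C) (eb {s})) =
      (if t = s then (1 : ℝ) else 0) • eb C - wedge (lint (eb {t}) (eb C)) (eb {s}) := by
  rw [wedge_eb_eb, lint_eb_eb]
  by_cases hsC : s ∈ C
  · rw [if_neg (fun h => (Finset.disjoint_right.1 h (Finset.mem_singleton_self s)) hsC),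
      lint_zero_right]
    by_cases hts : t = s
    · subst hts
      rw [if_pos rfl, one_smul, if_pos (Finset.singleton_subset_iff.2 hsC), wedge_smul_left,
        wedge_eb_eb,
        if_pos (Finset.disjoint_singleton_right.2
          (fun h => (Finset.mem_sdiff.1 h).2 (Finset.mem_singleton_self t))),
        smul_smul, esign_mul_self, one_smul,
        Finset.sdiff_union_of_subset (Finset.singleton_subset_iff.2 hsC), sub_self]
    · rw [if_neg hts, zero_smul, zero_sub]
      by_cases htC : t ∈ C
      · rw [if_pos (Finset.singleton_subset_iff.2 htC), wedge_smul_left, wedge_eb_eb,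
          if_neg (fun h => (Finset.disjoint_right.1 h (Finset.mem_singleton_self s))
            (Finset.mem_sdiff.2 ⟨hsC, fun hx => hts ((Finset.mem_singleton.1 hx).symm ▸ rfl)⟩)),
          smul_zero, neg_zero]
      · rw [if_neg (by simpa using htC), wedge_zero_left, neg_zero]
  · rw [if_pos (Finset.disjoint_singleton_right.2 hsC), lint_smul_right, lint_eb_eb]
    by_cases hts : t = s
    · subst hts
      rw [if_pos rfl, one_smul,
        if_pos (Finset.singleton_subset_iff.2 (Finset.mem_union_right C (Finset.mem_singleton_self t))),
        if_neg (by simpa using hsC), wedge_zero_left, sub_zero, smul_smul]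
      rw [Finset.union_sdiff_right, Finset.sdiff_singleton_eq_erase,
        Finset.erase_eq_of_notMem hsC, esign_mul_self, one_smul]
    · rw [if_neg hts, zero_smul, zero_sub]
      by_cases htC : t ∈ C
      · have hst : s ≠ t := Ne.symm hts
        have hUs : {t} ⊆ C ∪ {s} := Finset.singleton_subset_iff.2 (Finset.mem_union_left _ htC)
        rw [if_pos hUs, if_pos (Finset.singleton_subset_iff.2 htC), wedge_smul_left, wedge_eb_eb,
          if_pos (Finset.disjoint_singleton_right.2 (fun h => hsC (Finset.mem_sdiff.1 h).1)),
          sdiff_union_singleton hts, smul_smul, smul_smul, ← neg_smul]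
        congr 1
        have htA : t ∉ C \ {t} := fun h => (Finset.mem_sdiff.1 h).2 (Finset.mem_singleton_self t)
        have hsA : s ∉ C \ {t} := fun h => hsC (Finset.mem_sdiff.1 h).1
        have hC : C = insert t (C \ {t}) := by
          rw [← union_singleton', Finset.sdiff_union_of_subset
            (Finset.singleton_subset_iff.2 htC)]
        have hCs : esign C {s} = (if s < t then (-1:ℝ) else 1) * esign (C \ {t}) {s} := by
          conv_lhs => rw [hC]
          rw [esign_insert_singleton htA s]
        rw [union_singleton' (C \ {t}) s, esign_insert_singleton hsA t, hCs]
        have : ((if s < t then (-1 : ℝ) else 1) * (if t < s then (-1 : ℝ) else 1)) = -1 := by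
          rcases lt_trichotomy t s with h | h | h
          · rw [if_neg (asymm h), if_pos h]; ring
          · exact absurd h hts
          · rw [if_pos h, if_neg (asymm h)]; ring
        calc (if s < t then (-1:ℝ) else 1) * esign (C \ {t}) {s} *
              ((if t < s then (-1:ℝ) else 1) * esign (C \ {t}) {t})
            = ((if s < t then (-1:ℝ) else 1) * (if t < s then (-1:ℝ) else 1)) *
              (esign (C \ {t}) {t} * esign (C \ {t}) {s}) := by ring
          _ = -(esign (C \ {t}) {t} * esign (C \ {t}) {s}) := by rw [this]; ring
      · rw [if_neg (by
            simp only [Finset.singleton_subset_iff, Finset.mem_union, Finset.mem_singleton]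
            rintro (h | h)
            exacts [htC h, hts h]), smul_zero, if_neg (by simpa using htC), wedge_zero_left,
          neg_zero]

lemma lint_wedge_vec_eb (a b : N → ℝ) (C : Finset N) :
    lint (vec a) (wedge (eb C) (vec b)) =
      ipV a b • eb C - wedge (lint (vec a) (eb C)) (vec b) := by
  rw [vec_expand a, vec_expand b]
  simp only [wedge_sum_right, wedge_smul_right, lint_sum_left, lint_smul_left, lint_sum_right,
    lint_smul_right, wedge_sum_left, wedge_smul_left, lint_wedge_eb_eb, smul_sub,
    Finset.sum_sub_distrib, ipV, Finset.sum_smul]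
  congr 1
  · refine Finset.sum_congr rfl fun t _ => ?_
    simp only [smul_ite, smul_zero, one_smul, smul_smul, mul_ite, mul_one, mul_zero,
      ite_smul, zero_smul, Finset.sum_ite_eq', Finset.mem_univ, if_true, mul_comm]

lemma lint_wedge_vec (a b : N → ℝ) (y : Finset N → ℝ) :
    lint (vec a) (wedge y (vec b)) = ipV a b • y - wedge (lint (vec a) y) (vec b) := by
  conv_lhs => rw [← eb_expand y]
  conv_rhs => rw [← eb_expand y]
  rw [wedge_sum_left, lint_sum_right, lint_sum_right, wedge_sum_left, Finset.smul_sum,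
    ← Finset.sum_sub_distrib]
  refine Finset.sum_congr rfl fun C _ => ?_
  rw [wedge_smul_left, lint_smul_right, lint_smul_right, wedge_smul_left, lint_wedge_vec_eb,
    smul_sub, smul_comm (y C) (ipV a b)]

lemma lint_vec_unit (a : N → ℝ) : lint (vec a) (eb ∅) = 0 := by
  rw [vec_expand, lint_sum_left]
  refine Finset.sum_eq_zero fun t _ => ?_
  rw [lint_smul_left, lint_eb_eb, if_neg (by simp), smul_zero]

/- ## wedgeFam structure -/

lemma wedgeList_cons (x : Finset N → ℝ) (l : List (Finset N → ℝ)) :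
    wedgeList (x :: l) = wedge x (wedgeList l) := rfl

lemma wedgeList_append (l1 l2 : List (Finset N → ℝ)) :
    wedgeList (l1 ++ l2) = wedge (wedgeList l1) (wedgeList l2) := by
  induction l1 with
  | nil => rw [List.nil_append]; exact (wedge_unit_left _).symm
  | cons x l ih => rw [List.cons_append, wedgeList_cons, wedgeList_cons, ih, wedge_assoc]

lemma wedgeFam_empty (h : N → N → ℝ) : wedgeFam h ∅ = eb ∅ := by
  simp [wedgeFam, wedgeList]

lemma sort_max_append {S : Finset N} (hS : S.Nonempty) :
    S.sort (· ≤ ·) = (S.erase (S.max' hS)).sort (· ≤ ·) ++ [S.max' hS] := by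
  set m := S.max' hS with hm
  have hins : insert m (S.erase m) = S := Finset.insert_erase (S.max'_mem hS)
  have hperm : List.Perm ((S.erase m).sort (· ≤ ·) ++ [m]) (S.sort (· ≤ ·)) := by
    refine (List.perm_append_singleton m _).trans ?_
    refine (List.Perm.cons m (Finset.sort_perm_toList (S.erase m) (· ≤ ·))).trans ?_
    refine ((Finset.toList_insert (Finset.notMem_erase m S)).symm).trans ?_
    rw [hins]
    exact (Finset.sort_perm_toList S (· ≤ ·)).symm
  have hsorted : List.Pairwise (· ≤ ·) ((S.erase m).sort (· ≤ ·) ++ [m]) := by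
    refine List.pairwise_append.2 ⟨Finset.pairwise_sort _ _, List.pairwise_singleton _ _,
      fun x hx y hy => ?_⟩
    rw [List.mem_singleton] at hy
    subst hy
    exact Finset.le_max' S x (Finset.mem_of_mem_erase ((Finset.mem_sort _).1 hx))
  exact (hperm.eq_of_pairwise' hsorted (Finset.pairwise_sort _ _)).symm

lemma wedgeFam_peel (h : N → N → ℝ) {S : Finset N} (hS : S.Nonempty) :
    wedgeFam h S = wedge (wedgeFam h (S.erase (S.max' hS))) (vec (h (S.max' hS))) := by
  unfold wedgeFam
  rw [sort_max_append hS, List.map_append, wedgeList_append]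
  exact congrArg _ (wedge_unit_right (vec (h (S.max' hS))))

lemma vec_apply_empty (a : N → ℝ) : vec a ∅ = 0 := by
  rw [vec]
  exact Finset.sum_eq_zero fun i _ => if_neg (fun h => (Finset.singleton_ne_empty i) h.symm)

lemma wedge_apply_empty (f g : Finset N → ℝ) : wedge f g ∅ = f ∅ * g ∅ := by
  simp [wedge]

lemma wedgeFam_apply_empty (h : N → N → ℝ) (T : Finset N) :
    wedgeFam h T ∅ = if T = ∅ then 1 else 0 := by
  rcases T.eq_empty_or_nonempty with hT | hT
  · subst hT; rw [wedgeFam_empty, if_pos rfl]; simp [eb]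
  · rw [wedgeFam_peel h hT, wedge_apply_empty, vec_apply_empty, mul_zero,
      if_neg hT.ne_empty]

lemma ip_unit_left (x : Finset N → ℝ) : ip (eb ∅) x = x ∅ := by
  rw [ip, Finset.sum_eq_single ∅ (fun b _ hb => by simp [eb, hb])
    (fun hh => (hh (Finset.mem_univ _)).elim)]
  simp [eb]

lemma erase_comm' (S : Finset N) (a b : N) : (S.erase a).erase b = (S.erase b).erase a := by
  ext x
  simp only [Finset.mem_erase]
  tauto

lemma lint_vec_wedgeFam (a : N → ℝ) (h : N → N → ℝ) (T : Finset N) :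
    lint (vec a) (wedgeFam h T) =
      ∑ t ∈ T, ((-1 : ℝ) ^ ((T.filter fun t' => t < t').card) * ipV a (h t)) •
        wedgeFam h (T.erase t) := by
  induction T using Finset.strongInduction with
  | _ T ih =>
  rcases T.eq_empty_or_nonempty with rfl | hT
  · rw [wedgeFam_empty, lint_vec_unit]
    simp
  · set m := T.max' hT with hm
    have hmem : m ∈ T := T.max'_mem hT
    rw [wedgeFam_peel h hT, lint_wedge_vec, ih (T.erase m) (Finset.erase_ssubset hmem),
      wedge_sum_left, ← Finset.add_sum_erase T _ hmem]
    have hfm : ((T.filter fun t' => m < t').card) = 0 := by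
      rw [Finset.card_eq_zero, Finset.filter_eq_empty_iff]
      exact fun x hx => not_lt.2 (Finset.le_max' T x hx)
    rw [← hm, hfm, pow_zero, one_mul, sub_eq_add_neg, ← Finset.sum_neg_distrib]
    congr 1
    refine Finset.sum_congr rfl fun t ht => ?_
    have htT : t ∈ T := Finset.mem_of_mem_erase ht
    have htm : t ≠ m := Finset.ne_of_mem_erase ht
    have htlt : t < m := lt_of_le_of_ne (Finset.le_max' T t htT) htm
    have hmm : m ∈ T.erase t := Finset.mem_erase.2 ⟨Ne.symm htm, hmem⟩
    have hne : (T.erase t).Nonempty := ⟨m, hmm⟩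
    have hmax : (T.erase t).max' hne = m :=
      le_antisymm (Finset.max'_le _ hne _ fun x hx =>
        Finset.le_max' T x (Finset.mem_of_mem_erase hx)) (Finset.le_max' _ m hmm)
    have hpeel : wedgeFam h (T.erase t) =
        wedge (wedgeFam h ((T.erase t).erase m)) (vec (h m)) := by
      conv_lhs => rw [wedgeFam_peel h hne]
      rw [hmax]
    have hcard : ((T.filter fun t' => t < t').card) =
        (((T.erase m).filter fun t' => t < t').card) + 1 := by
      have hins : T.filter (fun t' => t < t') = insert m ((T.erase m).filter fun t' => t < t') := by
        conv_lhs => rw [← Finset.insert_erase hmem]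
        rw [Finset.filter_insert, if_pos htlt]
      rw [hins, Finset.card_insert_of_notMem
        (fun hmm' => (Finset.mem_erase.1 (Finset.mem_filter.1 hmm').1).1 rfl)]
    rw [wedge_smul_left, erase_comm' T m t, ← hpeel, hcard, pow_succ, ← neg_smul]
    congr 1
    ring

lemma ip_wedgeFam_peel (g h : N → N → ℝ) {S : Finset N} (hS : S.Nonempty) (T : Finset N) :
    ip (wedgeFam g S) (wedgeFam h T) =
      ∑ t ∈ T, ((-1 : ℝ) ^ ((T.filter fun t' => t < t').card)) * ipV (g (S.max' hS)) (h t) *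
        ip (wedgeFam g (S.erase (S.max' hS))) (wedgeFam h (T.erase t)) := by
  rw [wedgeFam_peel g hS, ip_wedge, lint_vec_wedgeFam, ip_sum_right]
  refine Finset.sum_congr rfl fun t _ => ?_
  rw [ip_smul_right]

lemma ip_wedgeFam_empty_left (g h : N → N → ℝ) (T : Finset N) :
    ip (wedgeFam g ∅) (wedgeFam h T) = if T = ∅ then 1 else 0 := by
  rw [wedgeFam_empty, ip_unit_left, wedgeFam_apply_empty]

lemma ip_wedgeFam_orthonormal (f : N → N → ℝ) (hf : Orthonormalish f) (S : Finset N) :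
    ∀ T : Finset N, ip (wedgeFam f S) (wedgeFam f T) = if S = T then 1 else 0 := by
  induction S using Finset.strongInduction with
  | _ S ih =>
  intro T
  rcases S.eq_empty_or_nonempty with rfl | hS
  · rw [ip_wedgeFam_empty_left]
    by_cases hT : T = ∅ <;> simp [hT, eq_comm]
  · set m := S.max' hS with hm
    have hmem : m ∈ S := S.max'_mem hS
    rw [ip_wedgeFam_peel f f hS T, ← hm]
    by_cases hmT : m ∈ T
    · rw [Finset.sum_eq_single_of_mem m hmT (fun b hb hbm => by
        rw [hf m b, if_neg (fun hh => hbm hh.symm), mul_zero, zero_mul])]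
      rw [hf m m, if_pos rfl, mul_one, ih (S.erase m) (Finset.erase_ssubset hmem)]
      by_cases hST : S = T
      · subst hST
        have hfm : ((S.filter fun t' => m < t').card) = 0 := by
          rw [Finset.card_eq_zero, Finset.filter_eq_empty_iff]
          exact fun x hx => not_lt.2 (Finset.le_max' S x hx)
        rw [hfm, pow_zero, if_pos rfl, if_pos rfl, one_mul]
      · rw [if_neg (fun hh : S.erase m = T.erase m => hST (by
          rw [← Finset.insert_erase hmem, hh, Finset.insert_erase hmT])), mul_zero, if_neg hST]
    · rw [Finset.sum_eq_zero (fun b hb => by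
        rw [hf m b, if_neg (fun hh : m = b => hmT (hh ▸ hb)), mul_zero, zero_mul]),
        if_neg (fun hh : S = T => hmT (hh ▸ hmem))]

lemma ip_color_vanish (d : ℕ) (c : N → Fin d) (e f : N → N → ℝ)
    (hcolorful : ∀ u v : N, c u ≠ c v → ipV (f v) (e u) = 0) (S : Finset N) :
    ∀ T : Finset N, ∀ j : Fin d,
      (S.filter fun x => c x = j).card ≠ (T.filter fun x => c x = j).card →
      ip (wedgeFam f S) (wedgeFam e T) = 0 := by
  induction S using Finset.strongInduction with
  | _ S ih =>
  intro T j hj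
  rcases S.eq_empty_or_nonempty with rfl | hS
  · rcases T.eq_empty_or_nonempty with rfl | hT
    · simp at hj
    · rw [ip_wedgeFam_empty_left, if_neg hT.ne_empty]
  · set m := S.max' hS with hm
    have hmem : m ∈ S := S.max'_mem hS
    rw [ip_wedgeFam_peel f e hS T, ← hm]
    refine Finset.sum_eq_zero fun t ht => ?_
    by_cases hct : c t = c m
    · have h0 : ip (wedgeFam f (S.erase m)) (wedgeFam e (T.erase t)) = 0 := by
        by_cases hjm : j = c m
        · subst hjm
          refine ih (S.erase m) (Finset.erase_ssubset hmem) (T.erase t) (c m) ?_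
          rw [Finset.filter_erase, Finset.filter_erase,
            Finset.card_erase_of_mem
              (Finset.mem_filter.2 ⟨hmem, rfl⟩ : m ∈ S.filter fun x => c x = c m),
            Finset.card_erase_of_mem
              (Finset.mem_filter.2 ⟨ht, hct⟩ : t ∈ T.filter fun x => c x = c m)]
          have h1 : 0 < (S.filter fun x => c x = c m).card :=
            Finset.card_pos.2 ⟨m, Finset.mem_filter.2 ⟨hmem, rfl⟩⟩
          have h2 : 0 < (T.filter fun x => c x = c m).card :=
            Finset.card_pos.2 ⟨t, Finset.mem_filter.2 ⟨ht, hct⟩⟩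
          omega
        · refine ih (S.erase m) (Finset.erase_ssubset hmem) (T.erase t) j ?_
          rw [Finset.filter_erase, Finset.filter_erase,
            Finset.erase_eq_of_notMem
              (fun hh => hjm (Finset.mem_filter.1 hh).2.symm),
            Finset.erase_eq_of_notMem
              (fun hh => hjm (hct ▸ (Finset.mem_filter.1 hh).2).symm)]
          exact hj
      rw [h0, mul_zero]
    · rw [hcolorful t m hct, mul_zero, zero_mul]

lemma wedgeFam_complete (f : N → N → ℝ) (hf : Orthonormalish f) (x : Finset N → ℝ) :
    (∑ S : Finset N, ip (wedgeFam f S) x • wedgeFam f S) = x := by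
  classical
  set W : Matrix (Finset N) (Finset N) ℝ := Matrix.of fun S U => wedgeFam f S U with hWdef
  have hW : W * W.transpose = 1 := by
    ext S T
    rw [Matrix.mul_apply, Matrix.one_apply]
    have : ∀ U, W S U * W.transpose U T = wedgeFam f S U * wedgeFam f T U := fun U => rfl
    rw [Finset.sum_congr rfl fun U _ => this U]
    rw [show (∑ U : Finset N, wedgeFam f S U * wedgeFam f T U) = ip (wedgeFam f S) (wedgeFam f T)
      from rfl, ip_wedgeFam_orthonormal f hf S T]
  have hW2 : W.transpose * W = 1 := mul_eq_one_comm.1 hW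
  have hcol : ∀ V U : Finset N,
      (∑ S : Finset N, wedgeFam f S V * wedgeFam f S U) = if V = U then 1 else 0 := by
    intro V U
    have := congrFun (congrFun hW2 V) U
    rw [Matrix.mul_apply, Matrix.one_apply] at this
    rw [← this]
    rfl
  funext U
  rw [Finset.sum_apply]
  simp only [Pi.smul_apply, smul_eq_mul, ip]
  have key : ∀ S : Finset N,
      (∑ V : Finset N, wedgeFam f S V * x V) * wedgeFam f S U
        = ∑ V : Finset N, wedgeFam f S V * wedgeFam f S U * x V := by
    intro S
    rw [Finset.sum_mul]
    exact Finset.sum_congr rfl fun V _ => by ring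
  rw [Finset.sum_congr rfl fun S _ => key S, Finset.sum_comm]
  have : ∀ V : Finset N, (∑ S : Finset N, wedgeFam f S V * wedgeFam f S U * x V)
      = (if V = U then 1 else 0) * x V := by
    intro V
    rw [← Finset.sum_mul, hcol V U]
  rw [Finset.sum_congr rfl fun V _ => this V]
  simp

lemma color_expansion (d : ℕ) (c : N → Fin d) (e f : N → N → ℝ)
    (hf : Orthonormalish f)
    (hcolorful : ∀ u v : N, c u ≠ c v → ipV (f v) (e u) = 0) (i : Fin d) (T : Finset N)
    (hT : ∀ x ∈ T, c x = i) :
    wedgeFam e T =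
      ∑ Si ∈ ((Finset.univ.filter fun x => c x = i).powerset.filter
          fun Si => Si.card = T.card),
        ip (wedgeFam f Si) (wedgeFam e T) • wedgeFam f Si := by
  conv_lhs => rw [← wedgeFam_complete f hf (wedgeFam e T)]
  symm
  refine Finset.sum_subset (Finset.subset_univ _) fun S _ hS => ?_
  have h0 : ip (wedgeFam f S) (wedgeFam e T) = 0 := by
    by_cases hsub : ∀ s ∈ S, c s = i
    · have hScard : ¬ S.card = T.card := by
        intro hcard
        exact hS (Finset.mem_filter.2 ⟨Finset.mem_powerset.2
          (fun s hs => Finset.mem_filter.2 ⟨Finset.mem_univ s, hsub s hs⟩), hcard⟩)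
      refine ip_color_vanish d c e f hcolorful S T i ?_
      rw [Finset.filter_true_of_mem hsub, Finset.filter_true_of_mem hT]
      exact hScard
    · push_neg at hsub
      obtain ⟨s, hsS, hsi⟩ := hsub
      refine ip_color_vanish d c e f hcolorful S T (c s) ?_
      have h1 : 0 < (S.filter fun x => c x = c s).card :=
        Finset.card_pos.2 ⟨s, Finset.mem_filter.2 ⟨hsS, rfl⟩⟩
      have h2 : (T.filter fun x => c x = c s) = ∅ :=
        Finset.filter_eq_empty_iff.2 fun x hx => by rw [hT x hx]; exact fun hh => hsi hh.symm
      rw [h2]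
      simp only [Finset.card_empty]
      omega
  rw [h0, zero_smul]

lemma count_sort_eq (S : Finset N) (a : N) :
    List.count a (S.sort (· ≤ ·)) = if a ∈ S then 1 else 0 := by
  by_cases h : a ∈ S
  · rw [if_pos h, List.count_eq_one_of_mem (Finset.sort_nodup S _) ((Finset.mem_sort _).2 h)]
  · rw [if_neg h, List.count_eq_zero_of_not_mem (fun hh => h ((Finset.mem_sort _).1 hh))]

lemma sort_color_flatten (d : ℕ) (c : N → Fin d) (hc : ∀ u v : N, u ≤ v → c u ≤ c v)
    (R : Finset N) :
    (List.ofFn fun i : Fin d => (R.filter fun x => c x = i).sort (· ≤ ·)).flatten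
      = R.sort (· ≤ ·) := by
  have hperm : List.Perm
      ((List.ofFn fun i : Fin d => (R.filter fun x => c x = i).sort (· ≤ ·)).flatten)
      (R.sort (· ≤ ·)) := by
    rw [List.perm_iff_count]
    intro a
    rw [List.count_flatten, List.map_ofFn, List.sum_ofFn, count_sort_eq]
    have : ∀ i : Fin d, List.count a ((R.filter fun x => c x = i).sort (· ≤ ·))
        = if c a = i ∧ a ∈ R then 1 else 0 := by
      intro i
      rw [count_sort_eq]
      congr 1
      simp only [Finset.mem_filter, eq_iff_iff]
      tauto
    simp only [Function.comp_apply]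
    rw [Finset.sum_congr rfl fun i _ => this (i : Fin d)]
    by_cases haR : a ∈ R
    · simp only [haR, and_true, if_pos, Finset.sum_ite_eq, Finset.mem_univ, if_true]
    · simp [haR]
  have hsorted : List.Pairwise (· ≤ ·)
      ((List.ofFn fun i : Fin d => (R.filter fun x => c x = i).sort (· ≤ ·)).flatten) := by
    rw [List.pairwise_flatten]
    refine ⟨fun l hl => ?_, ?_⟩
    · obtain ⟨i, rfl⟩ := List.mem_ofFn.1 hl
      exact Finset.pairwise_sort _ _
    · refine List.pairwise_ofFn.2 fun i j hij x hx y hy => ?_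
      have hcx : c x = i := (Finset.mem_filter.1 ((Finset.mem_sort _).1 hx)).2
      have hcy : c y = j := (Finset.mem_filter.1 ((Finset.mem_sort _).1 hy)).2
      by_contra hxy
      have hyx : y ≤ x := le_of_not_ge hxy
      have := hc y x hyx
      rw [hcx, hcy] at this
      exact absurd hij (not_lt.2 this)
  exact hperm.eq_of_pairwise' hsorted (Finset.pairwise_sort _ _)

lemma wedgeList_flatten (L : List (List (Finset N → ℝ))) :
    wedgeList L.flatten = wedgeList (L.map wedgeList) := by
  induction L with
  | nil => rfl
  | cons l L ih =>
    rw [List.flatten_cons, List.map_cons, wedgeList_cons, wedgeList_append, ih]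

/-- If (e,f) is a colorful pair of orthonormal bases with respect to a coloring c
compatible with the order on N, then for every R ⊆ N,
e_R = ⋀_i Σ_{S_i ⊆ N_i, |S_i| = |R_i|} ⟨f_{S_i}, e_{R_i}⟩ · f_{S_i}. -/
theorem eR_expansion (d : ℕ) (c : N → Fin d) (hc : ∀ u v : N, u ≤ v → c u ≤ c v)
    (e f : N → N → ℝ) (he : Orthonormalish e) (hf : Orthonormalish f)
    (hcolorful : ∀ u v : N, c u ≠ c v → ipV (f v) (e u) = 0) (R : Finset N) :
    wedgeFam e R =
      wedgeList (List.ofFn fun i : Fin d =>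
        ∑ Si ∈ ((Finset.univ.filter fun x => c x = i).powerset.filter
            fun Si => Si.card = (R.filter fun x => c x = i).card),
          ip (wedgeFam f Si) (wedgeFam e (R.filter fun x => c x = i)) • wedgeFam f Si) := by
  have hsplit : wedgeFam e R =
      wedgeList (List.ofFn fun i : Fin d => wedgeFam e (R.filter fun x => c x = i)) := by
    unfold wedgeFam
    conv_lhs => rw [← sort_color_flatten d c hc R]
    rw [List.map_flatten, wedgeList_flatten, List.map_ofFn, List.map_ofFn]
    rfl
  rw [hsplit]
  refine congrArg wedgeList (congrArg List.ofFn (funext fun i => ?_))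
  exact color_expansion d c e f hf hcolorful i _ (fun x hx => (Finset.mem_filter.1 hx).2)
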